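/- For every θ ∈ (−1,0)∪(0,∞), the two-parameter conditional Rényi entropy H_{1+θ,1+θ'}(X|Y), viewed as a function of θ' ∈ (−1,0)∪(0,∞), is maximized at θ' = θ; that is, H_{1+θ,1+θ'}(X|Y) ≤ H_{1+θ,1+θ}(X|Y) for all θ' ∈ (−1,0)∪(0,∞). -/

import Mathlib

/-! Write `b y = (∑ x, P (x, y) ^ (1 + θ)) ^ (1 / (1 + θ))`. The sum inside the logarithm of
`H_{1+θ}(P|Q)` is `∑ y, b y ^ (1 + θ) * Q y ^ (-θ) = ∑ y, Q y * (b y / Q y) ^ (1 + θ)`, a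
`Q`-average of a `(1 + θ)`-th power. By Jensen it is at least `(∑ y, b y) ^ (1 + θ)` when `θ > 0`
and at most that when `-1 < θ < 0`, with equality for `Q ∝ b`, i.e. `Q = P_Y^{(1+θ)}`. As
`s ↦ -(1/θ) log s` is decreasing for `θ > 0` and increasing for `θ < 0`, `P_Y^{(1+θ)}` maximizes
`H_{1+θ}(P|Q)` over every distribution `Q` charging each `y` that `P` charges, in particular over
`Q = P_Y^{(1+θ')}`. -/

open Real Filter

/-- Conditional Rényi entropy of order `1+θ` relative to `Q`. -/
noncomputable def condRenyiQ {𝒳 𝒴 : Type*} [Fintype 𝒳] [Fintype 𝒴]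
    (P : 𝒳 × 𝒴 → ℝ) (Q : 𝒴 → ℝ) (θ : ℝ) : ℝ :=
  -(1 / θ) * Real.log (∑ x : 𝒳, ∑ y : 𝒴,
    if 0 < P (x, y) then P (x, y) ^ (1 + θ) * Q y ^ (-θ) else 0)

/-- The optimizing distribution `P_Y^{(1+θ')}`. -/
noncomputable def tiltY {𝒳 𝒴 : Type*} [Fintype 𝒳] [Fintype 𝒴]
    (P : 𝒳 × 𝒴 → ℝ) (θ' : ℝ) (y : 𝒴) : ℝ :=
  (∑ x : 𝒳, P (x, y) ^ (1 + θ')) ^ (1 / (1 + θ'))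
    / ∑ y' : 𝒴, (∑ x : 𝒳, P (x, y') ^ (1 + θ')) ^ (1 / (1 + θ'))

/-- Two-parameter conditional Rényi entropy `H_{1+θ,1+θ'}(X|Y)`. -/
noncomputable def condRenyiTwo {𝒳 𝒴 : Type*} [Fintype 𝒳] [Fintype 𝒴]
    (P : 𝒳 × 𝒴 → ℝ) (θ θ' : ℝ) : ℝ :=
  condRenyiQ P (tiltY P θ') θ

open Finset

section PowerMean

variable {ι : Type*} {s : Finset ι} {w b : ι → ℝ} {θ : ℝ}

lemma mul_div_rpow_one_add {a q : ℝ} (ha : 0 ≤ a) (hq : 0 ≤ q) (hqa : q = 0 → a = 0)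
    (hθ : 1 + θ ≠ 0) : q * (a / q) ^ (1 + θ) = a ^ (1 + θ) * q ^ (-θ) := by
  rcases hq.eq_or_lt with rfl | hq
  · simp [hqa rfl, zero_rpow hθ]
  · rw [div_rpow ha hq.le, rpow_neg hq.le, rpow_add hq, rpow_one]
    field_simp

lemma rpow_one_add_mul_div_rpow_neg {a S : ℝ} (ha : 0 ≤ a) (hS : 0 < S) (hθ : 1 + θ ≠ 0) :
    a ^ (1 + θ) * (a / S) ^ (-θ) = a * S ^ θ := by
  rcases ha.eq_or_lt with rfl | ha
  · simp [zero_rpow hθ]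
  · rw [div_rpow ha.le hS.le, rpow_neg hS.le, rpow_add ha, rpow_one, rpow_neg ha.le]
    field_simp

lemma rpow_pos_iff_of_nonneg {a t : ℝ} (ha : 0 ≤ a) (ht : t ≠ 0) : 0 < a ^ t ↔ 0 < a := by
  rw [(rpow_nonneg ha t).lt_iff_ne', ha.lt_iff_ne', ne_eq, rpow_eq_zero ha ht]

lemma sum_mul_div_eq_sum (hwb : ∀ i ∈ s, w i = 0 → b i = 0) :
    ∑ i ∈ s, w i * (b i / w i) = ∑ i ∈ s, b i := by
  refine sum_congr rfl fun i hi => ?_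
  rcases eq_or_ne (w i) 0 with h | h
  · simp [h, hwb i hi h]
  · exact mul_div_cancel₀ _ h

lemma rpow_sum_le_sum_rpow_mul_rpow_neg (hw : ∀ i ∈ s, 0 ≤ w i) (hw1 : ∑ i ∈ s, w i = 1)
    (hb : ∀ i ∈ s, 0 ≤ b i) (hwb : ∀ i ∈ s, w i = 0 → b i = 0) (hθ : 0 ≤ θ) :
    (∑ i ∈ s, b i) ^ (1 + θ) ≤ ∑ i ∈ s, b i ^ (1 + θ) * w i ^ (-θ) := by
  have := rpow_arith_mean_le_arith_mean_rpow s w (fun i => b i / w i) hw hw1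
    (fun i hi => div_nonneg (hb i hi) (hw i hi)) (by linarith : 1 ≤ 1 + θ)
  rwa [sum_mul_div_eq_sum hwb, sum_congr rfl fun i hi =>
    mul_div_rpow_one_add (hb i hi) (hw i hi) (hwb i hi) (by linarith)] at this

lemma sum_rpow_mul_rpow_neg_le_rpow_sum (hw : ∀ i ∈ s, 0 ≤ w i) (hw1 : ∑ i ∈ s, w i = 1)
    (hb : ∀ i ∈ s, 0 ≤ b i) (hwb : ∀ i ∈ s, w i = 0 → b i = 0) (hθ₁ : -1 < θ) (hθ₀ : θ ≤ 0) :
    ∑ i ∈ s, b i ^ (1 + θ) * w i ^ (-θ) ≤ (∑ i ∈ s, b i) ^ (1 + θ) := by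
  have := (concaveOn_rpow (by linarith : 0 ≤ 1 + θ) (by linarith)).le_map_sum hw hw1
    (p := fun i => b i / w i) fun i hi => Set.mem_Ici.2 (div_nonneg (hb i hi) (hw i hi))
  simp only [smul_eq_mul] at this
  rwa [sum_mul_div_eq_sum hwb, sum_congr rfl fun i hi =>
    mul_div_rpow_one_add (hb i hi) (hw i hi) (hwb i hi) (by linarith)] at this

lemma sum_rpow_mul_div_sum_rpow_neg (hb : ∀ i ∈ s, 0 ≤ b i) (hθ : 1 + θ ≠ 0) :
    ∑ i ∈ s, b i ^ (1 + θ) * (b i / ∑ j ∈ s, b j) ^ (-θ) = (∑ i ∈ s, b i) ^ (1 + θ) := by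
  rcases (sum_nonneg hb).eq_or_lt with hS | hS
  · have hb0 := (sum_eq_zero_iff_of_nonneg hb).1 hS.symm
    rw [← hS, zero_rpow hθ]
    exact sum_eq_zero fun i hi => by simp [hb0 i hi, zero_rpow hθ]
  · rw [sum_congr rfl fun i hi => rpow_one_add_mul_div_rpow_neg (hb i hi) hS hθ, ← sum_mul,
      rpow_add hS, rpow_one]

end PowerMean

section Fiber

variable {𝒳 𝒴 : Type*} [Fintype 𝒳] {P : 𝒳 × 𝒴 → ℝ} {θ : ℝ}

noncomputable def fiberNorm (P : 𝒳 × 𝒴 → ℝ) (θ : ℝ) (y : 𝒴) : ℝ :=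
  (∑ x : 𝒳, P (x, y) ^ (1 + θ)) ^ (1 / (1 + θ))

lemma fiberNorm_nonneg (hP0 : ∀ p, 0 ≤ P p) (y : 𝒴) : 0 ≤ fiberNorm P θ y :=
  rpow_nonneg (sum_nonneg fun _ _ => rpow_nonneg (hP0 _) _) _

lemma fiberNorm_rpow (hP0 : ∀ p, 0 ≤ P p) (hθ : 1 + θ ≠ 0) (y : 𝒴) :
    fiberNorm P θ y ^ (1 + θ) = ∑ x : 𝒳, P (x, y) ^ (1 + θ) := by
  rw [fiberNorm, one_div, rpow_inv_rpow (sum_nonneg fun _ _ => rpow_nonneg (hP0 _) _) hθ]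

lemma fiberNorm_pos_iff (hP0 : ∀ p, 0 ≤ P p) (hθ : 1 + θ ≠ 0) {y : 𝒴} :
    0 < fiberNorm P θ y ↔ ∃ x, 0 < P (x, y) := by
  have hA := sum_nonneg fun x (_ : x ∈ univ) => rpow_nonneg (hP0 (x, y)) (1 + θ)
  rw [fiberNorm, rpow_pos_iff_of_nonneg hA (one_div_ne_zero hθ),
    sum_pos_iff_of_nonneg fun x _ => rpow_nonneg (hP0 (x, y)) _]
  simp only [mem_univ, true_and, rpow_pos_iff_of_nonneg (hP0 _) hθ]

variable [Fintype 𝒴]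

lemma tiltY_eq_fiberNorm_div (y : 𝒴) :
    tiltY P θ y = fiberNorm P θ y / ∑ y', fiberNorm P θ y' := rfl

lemma tiltY_nonneg (hP0 : ∀ p, 0 ≤ P p) (y : 𝒴) : 0 ≤ tiltY P θ y :=
  div_nonneg (fiberNorm_nonneg hP0 y) (sum_nonneg fun y' _ => fiberNorm_nonneg hP0 y')

lemma tiltY_pos (hP0 : ∀ p, 0 ≤ P p) (hθ : 1 + θ ≠ 0) {x : 𝒳} {y : 𝒴} (hxy : 0 < P (x, y)) :
    0 < tiltY P θ y := by
  have hy := (fiberNorm_pos_iff hP0 hθ).2 ⟨x, hxy⟩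
  exact div_pos hy (sum_pos' (fun y' _ => fiberNorm_nonneg hP0 y') ⟨y, mem_univ y, hy⟩)

lemma sum_tiltY (hP0 : ∀ p, 0 ≤ P p) (hP : ∃ p, 0 < P p) (hθ : 1 + θ ≠ 0) :
    ∑ y, tiltY P θ y = 1 := by
  obtain ⟨⟨x, y⟩, hxy⟩ := hP
  simp only [tiltY_eq_fiberNorm_div, ← sum_div]
  exact div_self (sum_pos' (fun y' _ => fiberNorm_nonneg hP0 y')
    ⟨y, mem_univ y, (fiberNorm_pos_iff hP0 hθ).2 ⟨x, hxy⟩⟩).ne'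

lemma condRenyiQ_eq_log_sum_fiberNorm (hP0 : ∀ p, 0 ≤ P p) (Q : 𝒴 → ℝ) (hθ : 1 + θ ≠ 0) :
    condRenyiQ P Q θ = -(1 / θ) * log (∑ y, fiberNorm P θ y ^ (1 + θ) * Q y ^ (-θ)) := by
  simp only [condRenyiQ, fiberNorm_rpow hP0 hθ, sum_mul]
  rw [sum_comm]
  congr 3 with y
  refine sum_congr rfl fun x _ => ?_
  rcases (hP0 (x, y)).eq_or_lt with h | h
  · simp [← h, zero_rpow hθ]
  · simp [h]

lemma condRenyiTwo_self_eq (hP0 : ∀ p, 0 ≤ P p) (hθ : 1 + θ ≠ 0) :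
    condRenyiTwo P θ θ = -(1 / θ) * log ((∑ y, fiberNorm P θ y) ^ (1 + θ)) := by
  rw [condRenyiTwo, condRenyiQ_eq_log_sum_fiberNorm hP0 _ hθ]
  simp only [tiltY_eq_fiberNorm_div]
  rw [sum_rpow_mul_div_sum_rpow_neg (fun y _ => fiberNorm_nonneg hP0 y) hθ]

theorem condRenyiQ_le_condRenyiTwo_self (hP0 : ∀ p, 0 ≤ P p) (hP : ∃ p, 0 < P p)
    (hθ₁ : -1 < θ) (hθ₀ : θ ≠ 0) {Q : 𝒴 → ℝ} (hQ0 : ∀ y, 0 ≤ Q y) (hQ1 : ∑ y, Q y = 1)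
    (hPQ : ∀ x y, 0 < P (x, y) → 0 < Q y) :
    condRenyiQ P Q θ ≤ condRenyiTwo P θ θ := by
  have hθ : 1 + θ ≠ 0 := by linarith
  have hb (y) (_ : y ∈ univ) : 0 ≤ fiberNorm P θ y := fiberNorm_nonneg hP0 y
  have hQb (y) (_ : y ∈ univ) (hy : Q y = 0) : fiberNorm P θ y = 0 := by
    by_contra h
    obtain ⟨x, hx⟩ := (fiberNorm_pos_iff hP0 hθ).1 ((hb y (mem_univ y)).lt_of_ne' h)
    exact (hPQ x y hx).ne' hy
  obtain ⟨⟨x₀, y₀⟩, hx₀⟩ := hP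
  have hy₀ : 0 < fiberNorm P θ y₀ := (fiberNorm_pos_iff hP0 hθ).2 ⟨x₀, hx₀⟩
  rw [condRenyiQ_eq_log_sum_fiberNorm hP0 _ hθ, condRenyiTwo_self_eq hP0 hθ]
  rcases hθ₀.lt_or_gt with hneg | hpos
  · refine mul_le_mul_of_nonneg_left (log_le_log ?_ ?_) (by simp [hneg.le])
    · exact sum_pos' (fun y _ => mul_nonneg (rpow_nonneg (hb y (mem_univ y)) _)
        (rpow_nonneg (hQ0 y) _))
        ⟨y₀, mem_univ _, mul_pos (rpow_pos_of_pos hy₀ _) (rpow_pos_of_pos (hPQ _ _ hx₀) _)⟩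
    · exact sum_rpow_mul_rpow_neg_le_rpow_sum (fun y _ => hQ0 y) hQ1 hb hQb hθ₁ hneg.le
  · refine mul_le_mul_of_nonpos_left (log_le_log ?_ ?_) (by simp [hpos.le])
    · exact rpow_pos_of_pos (sum_pos' hb ⟨y₀, mem_univ _, hy₀⟩) _
    · exact rpow_sum_le_sum_rpow_mul_rpow_neg (fun y _ => hQ0 y) hQ1 hb hQb hpos.le

end Fiber

lemma neg_one_lt_and_ne_zero_of_mem_Ioo_union_Ioi {θ : ℝ}
    (hθ : θ ∈ Set.Ioo (-1 : ℝ) 0 ∪ Set.Ioi 0) :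
    -1 < θ ∧ θ ≠ 0 := by
  rcases hθ with ⟨h₁, h₀⟩ | h₀
  · exact ⟨h₁, h₀.ne⟩
  · exact ⟨by linarith [Set.mem_Ioi.1 h₀], (Set.mem_Ioi.1 h₀).ne'⟩

theorem condRenyiTwo_le_diag {𝒳 𝒴 : Type*} [Fintype 𝒳] [Fintype 𝒴]
    (P : 𝒳 × 𝒴 → ℝ) (hP0 : ∀ p, 0 ≤ P p) (hP1 : ∑ p : 𝒳 × 𝒴, P p = 1)
    (θ : ℝ) (hθ : θ ∈ Set.Ioo (-1 : ℝ) 0 ∪ Set.Ioi 0) :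
    ∀ θ' ∈ Set.Ioo (-1 : ℝ) 0 ∪ Set.Ioi 0,
      condRenyiTwo P θ θ' ≤ condRenyiTwo P θ θ := by
  intro θ' hθ'
  obtain ⟨hθ₁, hθ₀⟩ := neg_one_lt_and_ne_zero_of_mem_Ioo_union_Ioi hθ
  have hθ'₁ : 1 + θ' ≠ 0 := by linarith [(neg_one_lt_and_ne_zero_of_mem_Ioo_union_Ioi hθ').1]
  obtain ⟨p, -, hp⟩ := exists_lt_of_sum_lt (s := univ) (f := 0) (g := P) (by simp [hP1])
  exact condRenyiQ_le_condRenyiTwo_self hP0 ⟨p, hp⟩ hθ₁ hθ₀ (tiltY_nonneg hP0)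
    (sum_tiltY hP0 ⟨p, hp⟩ hθ'₁) fun x y hxy => tiltY_pos hP0 hθ'₁ hxy
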